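/- Let t̄ ∈ (0,1) and let r > 0 be such that (t̄ − r, t̄ + r) ⊂ (0,1). Then ∫_{(0,1)²} 1_{{|y(x) − t̄| < r and ∂₁y(x) > 0}} · |∂₁y(x)| dx = −(2/π)·[cos(arcsin(t̄+r)) − cos(arcsin(t̄−r))] − (2/π)·(t̄−r)·[arcsin(t̄+r) − arcsin(t̄−r)] + 2r·(1 − (2/π)·arcsin(t̄+r)). -/

import Mathlib

/-!
Fubini reduces the integral to slices `x₂ = const`, on which `y = c · sin (π x₁)` with
`c = sin (π x₂) ∈ (0, 1]`. The constraint `∂₁y > 0` confines `x₁` to `(0, 1/2)`, which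
`x₁ ↦ y` maps diffeomorphically onto `(0, c)`; the substitution `t = y` turns the slice
integral into the length of `(t̄ - r, t̄ + r) ∩ (0, c)`. Exchanging the order of integration,
the integral becomes `∫_{t̄-r}^{t̄+r} |{x₂ ∈ (0,1) : t < sin (π x₂)}| dt
= ∫_{t̄-r}^{t̄+r} (1 - (2/π) arcsin t) dt`, and `t arcsin t + cos (arcsin t)` is an
antiderivative of `arcsin`.
-/

open Real MeasureTheory Filter Set

/-- `y(x₁,x₂) = sin(π x₁) sin(π x₂)`. -/
noncomputable def ybar (x : ℝ × ℝ) : ℝ := Real.sin (π * x.1) * Real.sin (π * x.2)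

/-- `∂₁ y (x₁,x₂) = π cos(π x₁) sin(π x₂)`. -/
noncomputable def d1y (x : ℝ × ℝ) : ℝ := π * Real.cos (π * x.1) * Real.sin (π * x.2)

theorem setIntegral_prod_symm {α β E : Type*} [MeasurableSpace α] [MeasurableSpace β]
    [NormedAddCommGroup E] [NormedSpace ℝ E] {μ : Measure α} {ν : Measure β} [SFinite μ]
    [SFinite ν] {s : Set α} {t : Set β} (f : α × β → E)
    (hf : IntegrableOn f (s ×ˢ t) (μ.prod ν)) :
    ∫ z in s ×ˢ t, f z ∂μ.prod ν = ∫ y in t, ∫ x in s, f (x, y) ∂μ ∂ν := by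
  rw [IntegrableOn, ← Measure.prod_restrict] at hf
  rw [← Measure.prod_restrict]
  exact integral_prod_symm f hf

theorem integral_arcsin {a b : ℝ} (ha : -1 ≤ a) (hab : a ≤ b) (hb : b ≤ 1) :
    ∫ x in a..b, arcsin x
      = (b * arcsin b + cos (arcsin b)) - (a * arcsin a + cos (arcsin a)) := by
  refine intervalIntegral.integral_eq_sub_of_hasDerivAt_of_le
    (f := fun x => x * arcsin x + cos (arcsin x)) hab (by fun_prop) (fun x hx => ?_)
    (continuous_arcsin.intervalIntegrable a b)
  obtain ⟨hax, hxb⟩ := hx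
  have h := hasDerivAt_arcsin (x := x) (by linarith) (by linarith)
  have h' := ((hasDerivAt_id' x).mul h).add ((hasDerivAt_cos (arcsin x)).comp x h)
  rw [sin_arcsin (by linarith) (by linarith)] at h'
  exact h'.congr_deriv (by ring)

theorem sin_pi_mul_one_sub (x : ℝ) : sin (π * (1 - x)) = sin (π * x) := by
  rw [mul_one_sub, sin_pi_sub]

theorem sin_pi_mul_pos {x : ℝ} (hx : x ∈ Ioo 0 1) : 0 < sin (π * x) :=
  sin_pos_of_pos_of_lt_pi (by nlinarith [pi_pos, hx.1]) (by nlinarith [pi_pos, hx.2])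

theorem cos_pi_mul_pos_iff {x : ℝ} (hx : x ∈ Ioo 0 1) : 0 < cos (π * x) ↔ x < 1 / 2 := by
  obtain ⟨hx0, hx1⟩ := hx
  constructor
  · intro h
    by_contra! hx
    exact h.not_ge
      (cos_nonpos_of_pi_div_two_le_of_le (by nlinarith [pi_pos]) (by nlinarith [pi_pos]))
  · intro h
    exact cos_pos_of_mem_Ioo ⟨by nlinarith [pi_pos], by nlinarith [pi_pos]⟩

theorem arcsin_div_pi_le_half (t : ℝ) : arcsin t / π ≤ 1 / 2 := by
  rw [div_le_iff₀ pi_pos]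
  linarith [arcsin_le_pi_div_two t]

theorem lt_sin_pi_mul_iff {t x : ℝ} (ht : t ∈ Icc (-1) 1) (hx : x ∈ Icc (-(1/2)) (1/2)) :
    t < sin (π * x) ↔ arcsin t / π < x := by
  have hπx : π * x ∈ Icc (-(π / 2)) (π / 2) :=
    ⟨by nlinarith [pi_pos, hx.1], by nlinarith [pi_pos, hx.2]⟩
  rw [← arcsin_lt_iff_lt_sin ht hπx, div_lt_iff₀ pi_pos, mul_comm]

theorem lt_sin_pi_mul_iff_mem_Ioo {t x : ℝ} (ht : t ∈ Icc 0 1) (hx : x ∈ Ioo 0 1) :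
    t < sin (π * x) ↔ x ∈ Ioo (arcsin t / π) (1 - arcsin t / π) := by
  have ht' : t ∈ Icc (-1) 1 := ⟨by linarith [ht.1], ht.2⟩
  have hhalf := arcsin_div_pi_le_half t
  obtain ⟨hx0, hx1⟩ := hx
  rcases le_total x (1 / 2) with hx | hx
  · rw [lt_sin_pi_mul_iff ht' ⟨by linarith, hx⟩, mem_Ioo]
    exact ⟨fun h => ⟨h, by linarith⟩, And.left⟩
  · rw [← sin_pi_mul_one_sub, lt_sin_pi_mul_iff ht' ⟨by linarith, by linarith⟩, mem_Ioo]
    have := div_nonneg (arcsin_nonneg.2 ht.1) pi_pos.le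
    exact ⟨fun h => ⟨by linarith, by linarith⟩, fun h => by linarith [h.2]⟩

theorem integral_Ioo_ite_lt_sin_pi_mul {t : ℝ} (ht : t ∈ Icc 0 1) :
    ∫ x in Ioo 0 1, (if t < sin (π * x) then 1 else 0 : ℝ) = 1 - 2 / π * arcsin t := by
  have hsub : Ioo (arcsin t / π) (1 - arcsin t / π) ⊆ Ioo 0 1 := by
    have := div_nonneg (arcsin_nonneg.2 ht.1) pi_pos.le
    exact Ioo_subset_Ioo (by linarith) (by linarith)
  rw [setIntegral_congr_fun measurableSet_Ioo
      (g := (Ioo (arcsin t / π) (1 - arcsin t / π)).indicator fun _ => 1)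
      (fun x hx => by simp only [indicator_apply, lt_sin_pi_mul_iff_mem_Ioo ht hx]),
    setIntegral_indicator measurableSet_Ioo, inter_eq_self_of_subset_right hsub, setIntegral_const,
    volume_real_Ioo_of_le (by linarith [arcsin_div_pi_le_half t])]
  simp only [smul_eq_mul, mul_one]
  ring

theorem hasDerivAt_sin_pi_mul_mul (c x : ℝ) :
    HasDerivAt (fun x => sin (π * x) * c) (π * cos (π * x) * c) x := by
  have h := (((hasDerivAt_id' x).const_mul π).sin).mul_const c
  rw [mul_one] at h
  exact h.congr_deriv (by ring)

theorem strictMonoOn_sin_pi_mul_mul {c : ℝ} (hc : 0 < c) :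
    StrictMonoOn (fun x => sin (π * x) * c) (Icc 0 (1 / 2)) := by
  intro x hx y hy hxy
  have hmem : ∀ z ∈ Icc (0 : ℝ) (1 / 2), π * z ∈ Icc (-(π / 2)) (π / 2) := fun z hz =>
    ⟨by nlinarith [pi_pos, hz.1], by nlinarith [pi_pos, hz.2]⟩
  exact mul_lt_mul_of_pos_right
    (strictMonoOn_sin (hmem x hx) (hmem y hy) (mul_lt_mul_of_pos_left hxy pi_pos)) hc

theorem integral_Ioo_abs_deriv_smul_sin_pi_mul {E : Type*} [NormedAddCommGroup E]
    [NormedSpace ℝ E] {c : ℝ} (hc : 0 < c) (g : ℝ → E) :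
    ∫ x in Ioo 0 (1 / 2), |π * cos (π * x) * c| • g (sin (π * x) * c)
      = ∫ t in Ioo 0 c, g t := by
  have hmono := strictMonoOn_sin_pi_mul_mul hc
  have himage : (fun x => sin (π * x) * c) '' Ioo 0 (1 / 2) = Ioo 0 c := by
    rw [(by fun_prop : Continuous fun x => sin (π * x) * c).continuousOn
      |>.image_Ioo_of_strictMonoOn (by norm_num) hmono]
    simp [← div_eq_mul_inv]
  rw [← himage, integral_image_eq_integral_abs_deriv_smul measurableSet_Ioo
    (fun x _ => (hasDerivAt_sin_pi_mul_mul c x).hasDerivWithinAt)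
    (hmono.injOn.mono Ioo_subset_Icc_self)]

theorem integral_Ioo_ite_abs_sub_lt {tbar r c : ℝ} (hr : r ≤ tbar) (hc : 0 < c) :
    ∫ x in Ioo 0 1, (if |sin (π * x) * c - tbar| < r ∧ 0 < π * cos (π * x) * c
        then |π * cos (π * x) * c| else 0)
      = ∫ t in Ioo (tbar - r) (tbar + r), (if t < c then 1 else 0 : ℝ) := by
  set g : ℝ → ℝ := fun t => if |t - tbar| < r then 1 else 0
  have hhalf : ∫ x in Ioo 0 1, (if |sin (π * x) * c - tbar| < r ∧ 0 < π * cos (π * x) * c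
        then |π * cos (π * x) * c| else 0)
      = ∫ x in Ioo 0 (1 / 2), |π * cos (π * x) * c| • g (sin (π * x) * c) := by
    have hsub : Ioo (0 : ℝ) (1 / 2) ⊆ Ioo 0 1 := Ioo_subset_Ioo_right (by norm_num)
    rw [← inter_eq_self_of_subset_right hsub,
      ← setIntegral_indicator measurableSet_Ioo]
    refine setIntegral_congr_fun measurableSet_Ioo fun x hx => ?_
    have hpos : 0 < π * cos (π * x) * c ↔ x ∈ Ioo 0 (1 / 2) := by
      rw [mul_pos_iff_of_pos_right hc, mul_pos_iff_of_pos_left pi_pos, cos_pi_mul_pos_iff hx]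
      exact ⟨fun h => ⟨hx.1, h⟩, fun h => h.2⟩
    simp only [indicator_apply, ← hpos, g, smul_eq_mul, mul_ite, mul_one, mul_zero, ite_and]
    split_ifs <;> rfl
  rw [hhalf, integral_Ioo_abs_deriv_smul_sin_pi_mul hc, ← integral_indicator measurableSet_Ioo,
    ← integral_indicator measurableSet_Ioo]
  -- `(0, c) ∩ (t̄ - r, t̄ + r) = (t̄ - r, t̄ + r) ∩ (-∞, c)` since `t̄ - r ≥ 0`
  congr 1
  funext t
  simp only [indicator_apply, mem_Ioo, g, abs_sub_lt_iff]
  split_ifs <;> grind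

theorem integrable_ite_lt_sin_pi_mul (μ ν : Measure ℝ) [IsFiniteMeasure μ]
    [IsFiniteMeasure ν] :
    Integrable (Function.uncurry fun x t => if t < sin (π * x) then (1 : ℝ) else 0)
      (μ.prod ν) := by
  have hS : MeasurableSet {p : ℝ × ℝ | p.2 < sin (π * p.1)} :=
    measurableSet_lt measurable_snd (by fun_prop)
  refine Integrable.of_bound
    (Measurable.ite hS measurable_const measurable_const).aestronglyMeasurable 1
    (Eventually.of_forall fun p => ?_)
  simp only [Function.uncurry]
  split_ifs <;> simp

theorem abs_d1y_le (x : ℝ × ℝ) : |d1y x| ≤ π := by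
  rw [d1y, abs_mul, abs_mul, abs_of_pos pi_pos]
  have := mul_le_mul (abs_cos_le_one (π * x.1)) (abs_sin_le_one (π * x.2)) (abs_nonneg _)
    zero_le_one
  nlinarith [pi_pos]

theorem integrableOn_ite_abs_d1y (tbar r : ℝ) :
    IntegrableOn (fun x => if |ybar x - tbar| < r ∧ 0 < d1y x then |d1y x| else 0)
      (Ioo 0 1 ×ˢ Ioo 0 1) (volume.prod volume) := by
  have hy : Continuous ybar := by unfold ybar; fun_prop
  have hd : Continuous d1y := by unfold d1y; fun_prop
  have hS : MeasurableSet {x | |ybar x - tbar| < r ∧ 0 < d1y x} :=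
    ((isOpen_lt ((hy.sub continuous_const).abs) continuous_const).inter
      (isOpen_lt continuous_const hd)).measurableSet
  refine IntegrableOn.of_bound (by simp [Measure.prod_prod, Real.volume_Ioo])
    (Measurable.ite hS hd.abs.measurable measurable_const).aestronglyMeasurable π
    (Eventually.of_forall fun x => ?_)
  split_ifs
  · simpa using abs_d1y_le x
  · simpa using pi_pos.le

theorem stmt6_general (tbar r : ℝ) (hr : 0 < r)
    (hsub : Set.Ioo (tbar - r) (tbar + r) ⊆ Set.Ioo (0:ℝ) 1) :
    (∫ x in Set.Ioo (0:ℝ) 1 ×ˢ Set.Ioo (0:ℝ) 1,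
        (if |ybar x - tbar| < r ∧ 0 < d1y x then |d1y x| else 0))
      = -(2 / π) * (Real.cos (Real.arcsin (tbar + r)) - Real.cos (Real.arcsin (tbar - r)))
        - (2 / π) * (tbar - r) * (Real.arcsin (tbar + r) - Real.arcsin (tbar - r))
        + 2 * r * (1 - 2 / π * Real.arcsin (tbar + r)) := by
  obtain ⟨hα, hβ⟩ := (Ioo_subset_Ioo_iff (by linarith)).1 hsub
  rw [Measure.volume_eq_prod, setIntegral_prod_symm _ (integrableOn_ite_abs_d1y tbar r)]
  calc _ = ∫ x₂ in Ioo 0 1, ∫ t in Ioo (tbar - r) (tbar + r),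
          if t < sin (π * x₂) then (1 : ℝ) else 0 :=
        setIntegral_congr_fun measurableSet_Ioo fun x₂ hx₂ =>
          integral_Ioo_ite_abs_sub_lt (by linarith) (sin_pi_mul_pos hx₂)
    _ = ∫ t in Ioo (tbar - r) (tbar + r), ∫ x₂ in Ioo 0 1,
          if t < sin (π * x₂) then (1 : ℝ) else 0 :=
        integral_integral_swap (integrable_ite_lt_sin_pi_mul _ _)
    _ = ∫ t in Ioo (tbar - r) (tbar + r), (1 - 2 / π * arcsin t) :=
        setIntegral_congr_fun measurableSet_Ioo fun t ht =>
          integral_Ioo_ite_lt_sin_pi_mul ⟨by linarith [ht.1], by linarith [ht.2]⟩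
    _ = _ := by
      rw [← integral_Ioc_eq_integral_Ioo, ← intervalIntegral.integral_of_le (by linarith),
        intervalIntegral.integral_sub intervalIntegrable_const
          (continuous_arcsin.intervalIntegrable _ _ |>.const_mul _),
        intervalIntegral.integral_const_mul, integral_arcsin (by linarith) (by linarith) hβ,
        intervalIntegral.integral_const]
      simp only [smul_eq_mul, mul_one]
      ring

/-- Let `t̄ ∈ (0,1)` and `r > 0` with `(t̄ − r, t̄ + r) ⊂ (0,1)`. Then
`∫_{(0,1)²} 1_{|y−t̄|<r, ∂₁y>0} |∂₁y| dx
  = −(2/π)(cos(arcsin(t̄+r)) − cos(arcsin(t̄−r)))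
    − (2/π)(t̄−r)(arcsin(t̄+r) − arcsin(t̄−r)) + 2r(1 − (2/π) arcsin(t̄+r))`. -/
theorem stmt6 (tbar r : ℝ) (ht : tbar ∈ Set.Ioo (0:ℝ) 1) (hr : 0 < r)
    (hsub : Set.Ioo (tbar - r) (tbar + r) ⊆ Set.Ioo (0:ℝ) 1) :
    (∫ x in Set.Ioo (0:ℝ) 1 ×ˢ Set.Ioo (0:ℝ) 1,
        (if |ybar x - tbar| < r ∧ 0 < d1y x then |d1y x| else 0))
      = -(2 / π) * (Real.cos (Real.arcsin (tbar + r)) - Real.cos (Real.arcsin (tbar - r)))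
        - (2 / π) * (tbar - r) * (Real.arcsin (tbar + r) - Real.arcsin (tbar - r))
        + 2 * r * (1 - 2 / π * Real.arcsin (tbar + r)) :=
  stmt6_general tbar r hr hsub
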